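/- arXiv:1604.01971 — 4 statements merged into one kernel-verified Lean document; each statement's English description precedes it below -/
import Mathlib

section
/- Fix a finite ground set M with m elements, an integer k with 1 ≤ k ≤ m, a real t > 0, and a family 𝒮 of subsets of M each of size exactly k. Define v(S) = |S|·t if |S| < k; v(S) = k·t if there exists T ∈ 𝒮 with T ⊆ S; and v(S) = (k - 1/2^{|S|})·t otherwise. Then v is monotone non-decreasing and submodular, i.e., for all S, T ⊆ M: v(S) + v(T) ≥ v(S∪T) + v(S∩T). -/
/-!
Up to the factor `t`, a set containing a member of `𝒮` is worth `k`, and any other set is worth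
`f (#S)` with `f n = n` for `n < k` and `f n = k - 2^(-n)` for `n ≥ k`. This `f` is monotone and
concave, and a concave function of the cardinality is submodular, which settles every case in
which `S ∪ T` contains no member of `𝒮`. In the remaining case neither `S` nor `T` does, so
`b = #(S ∩ T)` is strictly smaller than both `s = #S` and `τ = #T`, `s + τ ≥ k + b`, and the
geometric tail `2^(-s) + 2^(-τ) ≤ 2^(-b)` pays for the jump of the union to the value `k`.
-/

open Finset

section ConcaveSequence

variable {β : Type*} [AddCommGroup β] [PartialOrder β] [IsOrderedAddMonoid β]

theorem add_le_add_of_antitone_sub {f : ℕ → β} (hf : Antitone fun n => f (n + 1) - f n)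
    {b s : ℕ} (hbs : b ≤ s) (d : ℕ) : f (s + d) + f b ≤ f (b + d) + f s := by
  induction d with
  | zero => rw [add_zero, add_zero, add_comm]
  | succ d ih =>
    have step : f (s + d + 1) - f (s + d) ≤ f (b + d + 1) - f (b + d) := hf (by omega)
    rw [← add_assoc, ← add_assoc]
    calc f (s + d + 1) + f b
        = (f (s + d + 1) - f (s + d)) + (f (s + d) + f b) := by abel
      _ ≤ (f (b + d + 1) - f (b + d)) + (f (b + d) + f s) := add_le_add step ih
      _ = f (b + d + 1) + f s := by abel

theorem apply_card_union_add_apply_card_inter_le {α : Type*} [DecidableEq α] {f : ℕ → β}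
    (hf : Antitone fun n => f (n + 1) - f n) (S T : Finset α) :
    f #(S ∪ T) + f #(S ∩ T) ≤ f #S + f #T := by
  have hcard := card_union_add_card_inter S T
  have hinter : #(S ∩ T) ≤ #S := card_le_card inter_subset_left
  have hunion : #S ≤ #(S ∪ T) := card_le_card subset_union_left
  have key := add_le_add_of_antitone_sub hf hinter (#(S ∪ T) - #S)
  rwa [Nat.add_sub_cancel' hunion, show #(S ∩ T) + (#(S ∪ T) - #S) = #T by omega,
    add_comm (f #T)] at key

end ConcaveSequence

theorem one_div_two_pow_le_one (n : ℕ) : (1 : ℝ) / 2 ^ n ≤ 1 :=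
  div_le_one_of_le₀ (one_le_pow₀ one_le_two) (by positivity)

theorem one_div_two_pow_antitone : Antitone fun n : ℕ => (1 : ℝ) / 2 ^ n :=
  fun _ _ h => one_div_le_one_div_of_le (by positivity) (pow_le_pow_right₀ one_le_two h)

theorem one_div_two_pow_succ_add (n : ℕ) :
    (1 : ℝ) / 2 ^ (n + 1) + 1 / 2 ^ (n + 1) = 1 / 2 ^ n := by
  rw [pow_succ]; ring

theorem one_div_two_pow_add_le {b s τ : ℕ} (hs : b < s) (hτ : b < τ) :
    (1 : ℝ) / 2 ^ s + 1 / 2 ^ τ ≤ 1 / 2 ^ b := by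
  have halve := one_div_two_pow_succ_add b
  have hs' : (1 : ℝ) / 2 ^ s ≤ 1 / 2 ^ (b + 1) := one_div_two_pow_antitone hs
  have hτ' : (1 : ℝ) / 2 ^ τ ≤ 1 / 2 ^ (b + 1) := one_div_two_pow_antitone hτ
  linarith

noncomputable def freeValue (k n : ℕ) : ℝ := if n < k then n else k - 1 / 2 ^ n

section FreeValue

variable {k : ℕ}

theorem freeValue_le (n : ℕ) : freeValue k n ≤ k := by
  unfold freeValue
  split_ifs with h
  · exact_mod_cast h.le
  · linarith [one_div_pos.2 (pow_pos two_pos n : (0 : ℝ) < 2 ^ n)]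

theorem freeValue_monotone : Monotone (freeValue k) := by
  refine monotone_nat_of_le_succ fun n => ?_
  unfold freeValue
  split_ifs with h₁ h₂ h₂
  · push_cast; linarith
  · have : (n : ℝ) + 1 ≤ k := by exact_mod_cast h₁
    linarith [one_div_two_pow_le_one (n + 1)]
  · omega
  · have : (1 : ℝ) / 2 ^ (n + 1) ≤ 1 / 2 ^ n := one_div_two_pow_antitone n.le_succ
    linarith

theorem freeValue_succ_sub_antitone : Antitone fun n => freeValue k (n + 1) - freeValue k n := by
  refine antitone_nat_of_succ_le fun n => ?_
  have h₀ := one_div_two_pow_succ_add n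
  have h₁ := one_div_two_pow_succ_add (n + 1)
  have h₂ := one_div_two_pow_le_one n
  have h₃ : (0 : ℝ) < 1 / 2 ^ (n + 1 + 1) := by positivity
  obtain hk | rfl | rfl | hk : n + 2 < k ∨ k = n + 2 ∨ k = n + 1 ∨ k ≤ n := by omega
  all_goals
    unfold freeValue
    split_ifs <;> first | omega | (push_cast; linarith)

theorem add_freeValue_le_of_lt {b s τ : ℕ} (hs : b < s) (hτ : b < τ) (hk : k + b ≤ s + τ) :
    k + freeValue k b ≤ freeValue k s + freeValue k τ := by
  have hkbst : (k : ℝ) + b ≤ s + τ := by exact_mod_cast hk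
  have hbs : (b : ℝ) + 1 ≤ s := by exact_mod_cast hs
  have hbτ : (b : ℝ) + 1 ≤ τ := by exact_mod_cast hτ
  have hsum := one_div_two_pow_add_le hs hτ
  have hs1 := one_div_two_pow_le_one s
  have hτ1 := one_div_two_pow_le_one τ
  have hb1 := one_div_two_pow_le_one b
  rcases lt_or_ge b k with hb | hb
  · have hbk : (b : ℝ) + 1 ≤ k := by exact_mod_cast hb
    unfold freeValue
    split_ifs <;> first | omega | linarith
  · have hbk : (k : ℝ) ≤ b := by exact_mod_cast hb
    unfold freeValue
    split_ifs <;> first | omega | linarith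

end FreeValue

section MenuValue

variable {M : Type*} [DecidableEq M] {k : ℕ} {𝒮 : Finset (Finset M)}

noncomputable def menuValue (k : ℕ) (𝒮 : Finset (Finset M)) (S : Finset M) : ℝ :=
  if ∃ U ∈ 𝒮, U ⊆ S then k else freeValue k #S

theorem menuValue_of_exists {S : Finset M} (h : ∃ U ∈ 𝒮, U ⊆ S) : menuValue k 𝒮 S = k :=
  if_pos h

theorem menuValue_of_not_exists {S : Finset M} (h : ¬∃ U ∈ 𝒮, U ⊆ S) :
    menuValue k 𝒮 S = freeValue k #S :=
  if_neg h

theorem menuValue_le (S : Finset M) : menuValue k 𝒮 S ≤ k := by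
  unfold menuValue
  split_ifs
  exacts [le_rfl, freeValue_le _]

theorem menuValue_monotone : Monotone (menuValue k 𝒮) := by
  intro S T hST
  by_cases hT : ∃ U ∈ 𝒮, U ⊆ T
  · rw [menuValue_of_exists hT]
    exact menuValue_le S
  · have hS : ¬∃ U ∈ 𝒮, U ⊆ S := fun ⟨U, hU, hUS⟩ => hT ⟨U, hU, hUS.trans hST⟩
    rw [menuValue_of_not_exists hS, menuValue_of_not_exists hT]
    exact freeValue_monotone (card_le_card hST)

theorem menuValue_union_add_inter_le (h𝒮 : ∀ U ∈ 𝒮, k ≤ #U) (S T : Finset M) :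
    menuValue k 𝒮 (S ∪ T) + menuValue k 𝒮 (S ∩ T) ≤ menuValue k 𝒮 S + menuValue k 𝒮 T := by
  have hmono := menuValue_monotone (k := k) (𝒮 := 𝒮)
  by_cases hS : ∃ U ∈ 𝒮, U ⊆ S
  · have hST : ∃ U ∈ 𝒮, U ⊆ S ∪ T := hS.imp fun U hU => ⟨hU.1, hU.2.trans subset_union_left⟩
    rw [menuValue_of_exists hST, menuValue_of_exists hS]
    linarith [hmono (inter_subset_right : S ∩ T ⊆ T)]
  by_cases hT : ∃ U ∈ 𝒮, U ⊆ T
  · have hST : ∃ U ∈ 𝒮, U ⊆ S ∪ T := hT.imp fun U hU => ⟨hU.1, hU.2.trans subset_union_right⟩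
    rw [menuValue_of_exists hST, menuValue_of_exists hT]
    linarith [hmono (inter_subset_left : S ∩ T ⊆ S)]
  have hI : ¬∃ U ∈ 𝒮, U ⊆ S ∩ T := fun ⟨U, hU, hUI⟩ => hS ⟨U, hU, hUI.trans inter_subset_left⟩
  rw [menuValue_of_not_exists hS, menuValue_of_not_exists hT, menuValue_of_not_exists hI]
  by_cases hU : ∃ U ∈ 𝒮, U ⊆ S ∪ T
  · obtain ⟨U, hU𝒮, hUST⟩ := hU
    have hST : ¬S ⊆ T := fun h => hT ⟨U, hU𝒮, by rwa [union_eq_right.2 h] at hUST⟩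
    have hTS : ¬T ⊆ S := fun h => hS ⟨U, hU𝒮, by rwa [union_eq_left.2 h] at hUST⟩
    have hk : k ≤ #(S ∪ T) := (h𝒮 U hU𝒮).trans (card_le_card hUST)
    rw [menuValue_of_exists ⟨U, hU𝒮, hUST⟩]
    refine add_freeValue_le_of_lt (card_lt_card (inf_lt_left.2 hST))
      (card_lt_card (inf_lt_right.2 hTS)) ?_
    have := card_union_add_card_inter S T
    omega
  · rw [menuValue_of_not_exists hU]
    exact apply_card_union_add_apply_card_inter_le freeValue_succ_sub_antitone S T

end MenuValue

theorem stmt1_general {M : Type*} [DecidableEq M]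
    (k : ℕ)
    (t : ℝ) (ht : 0 < t)
    (𝒮 : Finset (Finset M)) (h𝒮 : ∀ T ∈ 𝒮, T.card = k)
    (v : Finset M → ℝ)
    (hv1 : ∀ S : Finset M, S.card < k → v S = S.card * t)
    (hv2 : ∀ S : Finset M, (∃ T ∈ 𝒮, T ⊆ S) → v S = k * t)
    (hv3 : ∀ S : Finset M, ¬ S.card < k → ¬ (∃ T ∈ 𝒮, T ⊆ S) →
      v S = (k - 1 / 2 ^ S.card) * t) :
    (∀ S T : Finset M, S ⊆ T → v S ≤ v T) ∧
    (∀ S T : Finset M, v (S ∪ T) + v (S ∩ T) ≤ v S + v T) := by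
  have hv : ∀ S, v S = menuValue k 𝒮 S * t := by
    intro S
    by_cases hS : ∃ U ∈ 𝒮, U ⊆ S
    · rw [menuValue_of_exists hS, hv2 S hS]
    · rw [menuValue_of_not_exists hS, freeValue]
      split_ifs with hcard
      exacts [hv1 S hcard, hv3 S hcard hS]
  refine ⟨fun S T hST => ?_, fun S T => ?_⟩
  · rw [hv, hv]
    exact mul_le_mul_of_nonneg_right (menuValue_monotone hST) ht.le
  · simp only [hv, ← add_mul]
    exact mul_le_mul_of_nonneg_right
      (menuValue_union_add_inter_le (fun U hU => (h𝒮 U hU).ge) S T) ht.le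

/-- The valuation used in the menu-verification reduction for submodular valuations
is monotone non-decreasing and submodular. -/
theorem stmt1 {M : Type*} [Fintype M] [DecidableEq M]
    (k : ℕ) (hk1 : 1 ≤ k) (hk2 : k ≤ Fintype.card M)
    (t : ℝ) (ht : 0 < t)
    (𝒮 : Finset (Finset M)) (h𝒮 : ∀ T ∈ 𝒮, T.card = k)
    (v : Finset M → ℝ)
    (hv1 : ∀ S : Finset M, S.card < k → v S = S.card * t)
    (hv2 : ∀ S : Finset M, (∃ T ∈ 𝒮, T ⊆ S) → v S = k * t)
    (hv3 : ∀ S : Finset M, ¬ S.card < k → ¬ (∃ T ∈ 𝒮, T ⊆ S) →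
      v S = (k - 1 / 2 ^ S.card) * t) :
    (∀ S T : Finset M, S ⊆ T → v S ≤ v T) ∧
    (∀ S T : Finset M, v (S ∪ T) + v (S ∩ T) ≤ v S + v T) :=
  stmt1_general k t ht 𝒮 h𝒮 v hv1 hv2 hv3
end

section
/- Let f_z(l) denote the deterministic communication complexity of the z-disjointness problem with n players on l-bit strings (each player i's input A^i is restricted to a known set S^i ⊆ {0,1}^l, and every input profile in S^1 × … × S^n has at most z intersecting bits, where a bit k intersects if A^i_k = 1 for all i). Then for every z ≥ 2, f_z(l) ≤ f_1(l^z) + f_{z-1}(l), and consequently f_z(l) ≤ z · f_1(l^z). -/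
/-!
If at most `z` bits intersect, the `z`-products of the inputs intersect exactly when `z` bits do,
and then in a single bit (the `z`-subset of all intersecting positions). So a `1`-disjointness
protocol on the `z`-products (strings of length `l ^ z`, indexed by `z`-tuples of positions) detects
the case of `z` intersecting bits. If it rejects, its transcript `T` cuts out a rectangle
`S₁(T) × ⋯ × Sₙ(T)` of inputs, all with at most `z - 1` intersecting bits, on which a
`(z - 1)`-disjointness protocol finishes the job. Iterating, with `f₁` monotone in the length,
gives `f_z(l) ≤ z · f₁(l ^ z)`.
-/

/-- A deterministic number-in-hand blackboard protocol for `n` players holding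
`l`-bit strings: in each round a speaker (determined by the transcript so far)
appends one bit, which may depend on his own input and the transcript. -/
structure CommProtocol (n l : ℕ) where
  rounds : ℕ
  speaker : List Bool → Fin n
  message : Fin n → (Fin l → Bool) → List Bool → Bool
  output : List Bool → Bool

namespace CommProtocol

def transcript {n l : ℕ} (P : CommProtocol n l) (A : Fin n → Fin l → Bool) : ℕ → List Bool
  | 0 => []
  | t + 1 =>
      let T := transcript P A t
      T ++ [P.message (P.speaker T) (A (P.speaker T)) T]

def run {n l : ℕ} (P : CommProtocol n l) (A : Fin n → Fin l → Bool) : Bool :=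
  P.output (P.transcript A P.rounds)

end CommProtocol

/-- Bit `k` intersects if all players hold a `1` there; an input intersects if some
bit intersects. -/
def intersects {n l : ℕ} (A : Fin n → Fin l → Bool) : Prop :=
  ∃ k : Fin l, ∀ i : Fin n, A i k = true

/-- A protocol correctly decides disjointness on all inputs from the restriction sets. -/
def CorrectOn {n l : ℕ} (P : CommProtocol n l) (S : Fin n → Set (Fin l → Bool)) : Prop :=
  ∀ A : Fin n → Fin l → Bool, (∀ i, A i ∈ S i) → (P.run A = true ↔ intersects A)

/-- The `z`-disjointness promise: every joint input has at most `z` intersecting bits. -/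
def Promise (n l z : ℕ) (S : Fin n → Set (Fin l → Bool)) : Prop :=
  ∀ A : Fin n → Fin l → Bool, (∀ i, A i ∈ S i) →
    (Finset.univ.filter (fun k : Fin l => ∀ i, A i k = true)).card ≤ z

/-- `disjCC n l z` : the deterministic communication complexity of `z`-disjointness,
i.e. the least `c` such that every family of restriction sets satisfying the
`z`-promise admits a correct protocol of cost at most `c`. -/
noncomputable def disjCC (n l z : ℕ) : ℕ :=
  sInf {c : ℕ | ∀ S : Fin n → Set (Fin l → Bool), Promise n l z S →
    ∃ P : CommProtocol n l, P.rounds ≤ c ∧ CorrectOn P S}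

namespace CommProtocol

section Transcript

variable {n l : ℕ} (P : CommProtocol n l) (A : Fin n → Fin l → Bool)

theorem transcript_succ (t : ℕ) :
    P.transcript A (t + 1) = P.transcript A t ++
      [P.message (P.speaker (P.transcript A t)) (A (P.speaker (P.transcript A t)))
        (P.transcript A t)] := rfl

@[simp]
theorem length_transcript (t : ℕ) : (P.transcript A t).length = t := by
  induction t with
  | zero => rfl
  | succ t ih => simp [transcript_succ, ih]

theorem take_transcript {s t : ℕ} (h : s ≤ t) :
    (P.transcript A t).take s = P.transcript A s := by
  induction t, h using Nat.le_induction with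
  | base => simp
  | succ t hst ih =>
    rw [transcript_succ, List.take_append_of_le_length (by simpa using hst), ih]

theorem getElem_transcript {r t : ℕ} (ht : t < (P.transcript A r).length) :
    (P.transcript A r)[t] =
      P.message (P.speaker (P.transcript A t)) (A (P.speaker (P.transcript A t)))
        (P.transcript A t) := by
  have htr : t + 1 ≤ r := by simpa using ht
  rw [List.getElem_take' ht (Nat.lt_succ_self t), List.getElem_of_eq (P.take_transcript A htr)]
  simp [transcript_succ]

def Consistent (i : Fin n) (a : Fin l → Bool) (T : List Bool) : Prop :=
  ∀ t (ht : t < T.length), P.speaker (T.take t) = i → T[t] = P.message i a (T.take t)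

theorem consistent_transcript (r : ℕ) (i : Fin n) : P.Consistent i (A i) (P.transcript A r) := by
  intro t ht hi
  have htr : t ≤ r := by simp at ht; omega
  rw [P.take_transcript A htr] at hi ⊢
  rw [getElem_transcript, hi]

variable {P A} in
theorem transcript_eq_of_consistent {T : List Bool} (h : ∀ i, P.Consistent i (A i) T) :
    P.transcript A T.length = T := by
  suffices ∀ t ≤ T.length, P.transcript A t = T.take t by simpa using this T.length le_rfl
  intro t ht
  induction t with
  | zero => simp [transcript]
  | succ t ih =>
    rw [transcript_succ, ih (by omega), List.take_succ_eq_append_getElem (by omega),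
      h _ t (by omega) rfl]

variable {P A} in
theorem run_eq_output_of_consistent {T : List Bool} (hT : T.length = P.rounds)
    (h : ∀ i, P.Consistent i (A i) T) : P.run A = P.output T := by
  rw [run, ← hT, transcript_eq_of_consistent h]

end Transcript

section Combinators

variable {n l : ℕ}

def withRounds (P : CommProtocol n l) (r : ℕ) : CommProtocol n l :=
  { P with rounds := r, output := fun T => P.output (T.take P.rounds) }

theorem transcript_withRounds (P : CommProtocol n l) (r : ℕ) (A : Fin n → Fin l → Bool)
    (t : ℕ) : (P.withRounds r).transcript A t = P.transcript A t := by
  induction t with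
  | zero => rfl
  | succ t ih => rw [transcript_succ, transcript_succ, ih]; rfl

theorem run_withRounds (P : CommProtocol n l) {r : ℕ} (h : P.rounds ≤ r)
    (A : Fin n → Fin l → Bool) : (P.withRounds r).run A = P.run A := by
  rw [run, transcript_withRounds]
  exact congrArg P.output (P.take_transcript A h)

def comap {l' : ℕ} (P : CommProtocol n l') (g : (Fin l → Bool) → Fin l' → Bool) :
    CommProtocol n l :=
  { P with message := fun i a T => P.message i (g a) T }

theorem transcript_comap {l' : ℕ} (P : CommProtocol n l')
    (g : (Fin l → Bool) → Fin l' → Bool) (A : Fin n → Fin l → Bool) (t : ℕ) :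
    (P.comap g).transcript A t = P.transcript (fun i => g (A i)) t := by
  induction t with
  | zero => rfl
  | succ t ih => rw [transcript_succ, transcript_succ, ih]; rfl

theorem run_comap {l' : ℕ} (P : CommProtocol n l') (g : (Fin l → Bool) → Fin l' → Bool)
    (A : Fin n → Fin l → Bool) : (P.comap g).run A = P.run (fun i => g (A i)) :=
  congrArg P.output (transcript_comap P g A P.rounds)

@[simps]
def orElse (P : CommProtocol n l) (Q : List Bool → CommProtocol n l) (r : ℕ) :
    CommProtocol n l where
  rounds := P.rounds + r
  speaker T :=
    if T.length < P.rounds then P.speaker T else (Q (T.take P.rounds)).speaker (T.drop P.rounds)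
  message i a T :=
    if T.length < P.rounds then P.message i a T
    else (Q (T.take P.rounds)).message i a (T.drop P.rounds)
  output T := P.output (T.take P.rounds) || (Q (T.take P.rounds)).output (T.drop P.rounds)

variable (P : CommProtocol n l) (Q : List Bool → CommProtocol n l) (r : ℕ)
  (A : Fin n → Fin l → Bool)

theorem transcript_orElse_of_le {t : ℕ} (ht : t ≤ P.rounds) :
    (P.orElse Q r).transcript A t = P.transcript A t := by
  induction t with
  | zero => rfl
  | succ t ih =>
    have hlt : (P.transcript A t).length < P.rounds := by simp; omega
    simp only [transcript_succ, ih (by omega), orElse_speaker, orElse_message, if_pos hlt]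

theorem transcript_orElse_add (t : ℕ) :
    (P.orElse Q r).transcript A (P.rounds + t) =
      P.transcript A P.rounds ++ (Q (P.transcript A P.rounds)).transcript A t := by
  induction t with
  | zero => simp [P.transcript_orElse_of_le Q r A le_rfl, transcript]
  | succ t ih =>
    rw [← add_assoc, transcript_succ, ih]
    simp [orElse_speaker, orElse_message, transcript_succ]

theorem run_orElse (hQ : ∀ T, (Q T).rounds = r) :
    (P.orElse Q r).run A = (P.run A || (Q (P.transcript A P.rounds)).run A) := by
  simp [run, orElse_output, orElse_rounds, transcript_orElse_add, hQ]

end Combinators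

section AnnounceAll

variable {n l : ℕ} [NeZero n]

/-- In round `t` player `t / l` (mod `n`) announces his bit `t % l`, so after `n * l` rounds
bit `k` of player `i` stands at position `i * l + k`. -/
def announceAll (n l : ℕ) [NeZero n] : CommProtocol n l where
  rounds := n * l
  speaker T := Fin.ofNat n (T.length / l)
  message _ a T := (List.ofFn a).getD (T.length % l) false
  output T := decide (∃ k : Fin l, ∀ i : Fin n, T.getD (i * l + k) false = true)

theorem getD_transcript_announceAll (A : Fin n → Fin l → Bool) (i : Fin n) (k : Fin l) :
    ((announceAll n l).transcript A (n * l)).getD (i * l + k) false = A i k := by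
  have hlt : (i : ℕ) * l + k < n * l := by nlinarith [i.isLt, k.isLt]
  have hdiv : ((i : ℕ) * l + k) / l = i := by
    rw [add_comm, Nat.add_mul_div_right _ _ (k.pos), Nat.div_eq_of_lt k.isLt, zero_add]
  have hmod : ((i : ℕ) * l + k) % l = k := by
    rw [Nat.mul_add_mod_of_lt k.isLt]
  rw [List.getD_eq_getElem _ _ (by simpa using hlt), getElem_transcript]
  simp [announceAll, hdiv, hmod, Fin.ofNat, Nat.mod_eq_of_lt i.isLt]

theorem run_announceAll (A : Fin n → Fin l → Bool) :
    (announceAll n l).run A = true ↔ intersects A := by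
  change decide (∃ k : Fin l, ∀ i : Fin n,
    ((announceAll n l).transcript A (n * l)).getD (i * l + k) false = true) = true ↔ _
  simp only [decide_eq_true_eq, getD_transcript_announceAll, intersects]

end AnnounceAll

end CommProtocol

open CommProtocol

section Disjointness

variable {n l z : ℕ}

def intersectingBits (A : Fin n → Fin l → Bool) : Finset (Fin l) :=
  Finset.univ.filter fun k => ∀ i, A i k = true

theorem mem_intersectingBits {A : Fin n → Fin l → Bool} {k : Fin l} :
    k ∈ intersectingBits A ↔ ∀ i, A i k = true := by
  simp [intersectingBits]

theorem intersects_iff_nonempty {A : Fin n → Fin l → Bool} :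
    intersects A ↔ (intersectingBits A).Nonempty := by
  simp [intersects, Finset.Nonempty, mem_intersectingBits]

theorem promise_image {l' : ℕ} {g : (Fin l → Bool) → Fin l' → Bool}
    {S : Fin n → Set (Fin l → Bool)}
    (h : ∀ A : Fin n → Fin l → Bool, (∀ i, A i ∈ S i) →
      (intersectingBits fun i => g (A i)).card ≤ z) :
    Promise n l' z fun i => g '' S i := by
  intro B hB
  choose A hA hgA using hB
  obtain rfl : (fun i => g (A i)) = B := funext hgA
  exact h A hA

theorem disjCC_le {c : ℕ}
    (h : ∀ S, Promise n l z S → ∃ P : CommProtocol n l, P.rounds ≤ c ∧ CorrectOn P S) :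
    disjCC n l z ≤ c :=
  Nat.sInf_le h

theorem exists_rounds_eq_disjCC [NeZero n] (S : Fin n → Set (Fin l → Bool)) :
    ∃ P : CommProtocol n l, P.rounds = disjCC n l z ∧ (Promise n l z S → CorrectOn P S) := by
  by_cases hS : Promise n l z S
  swap
  · exact ⟨(announceAll n l).withRounds _, rfl, fun h => absurd h hS⟩
  have hne : {c : ℕ | ∀ S : Fin n → Set (Fin l → Bool), Promise n l z S →
      ∃ P : CommProtocol n l, P.rounds ≤ c ∧ CorrectOn P S}.Nonempty :=
    ⟨n * l, fun S _ => ⟨announceAll n l, le_rfl, fun A _ => run_announceAll A⟩⟩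
  obtain ⟨P, hP, hcorrect⟩ := Nat.sInf_mem hne S hS
  exact ⟨P.withRounds _, rfl, fun _ A hA => P.run_withRounds hP A ▸ hcorrect A hA⟩

/-- With no players there is no protocol at all, so `disjCC` is the junk value `sInf ∅ = 0`
(or `sInf univ = 0` when the promise fails). -/
theorem disjCC_zero_left (l z : ℕ) : disjCC 0 l z = 0 := by
  rw [disjCC, Nat.sInf_eq_zero]
  by_cases h : l ≤ z
  · right
    refine Set.eq_empty_of_forall_notMem fun c hc => ?_
    obtain ⟨P, -⟩ := hc (fun _ => Set.univ) fun A _ => by simpa using h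
    exact (P.speaker []).elim0
  · left
    intro S hS
    have := hS (fun i => i.elim0) fun i => i.elim0
    simp at this
    omega

def padZeros (l' : ℕ) (a : Fin l → Bool) (k : Fin l') : Bool :=
  if hk : (k : ℕ) < l then a ⟨k, hk⟩ else false

theorem intersectingBits_padZeros [NeZero n] {l' : ℕ} (h : l ≤ l')
    (A : Fin n → Fin l → Bool) :
    intersectingBits (fun i => padZeros l' (A i)) =
      (intersectingBits A).map (Fin.castLEEmb h) := by
  ext k
  by_cases hk : (k : ℕ) < l
  · obtain ⟨j, rfl⟩ : ∃ j : Fin l, Fin.castLE h j = k := ⟨⟨k, hk⟩, rfl⟩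
    simp [mem_intersectingBits, padZeros]
  · simp only [mem_intersectingBits, padZeros, dif_neg hk, Finset.mem_map]
    simp only [Bool.false_eq_true, forall_const, false_iff, not_exists, not_and]
    rintro j - rfl
    exact hk j.isLt

theorem disjCC_mono_length [NeZero n] {l' : ℕ} (h : l ≤ l') :
    disjCC n l z ≤ disjCC n l' z := by
  refine disjCC_le fun S hS => ?_
  have hpad : ∀ A : Fin n → Fin l → Bool,
      (intersectingBits fun i => padZeros l' (A i)).card = (intersectingBits A).card := by
    simp [intersectingBits_padZeros h]
  obtain ⟨P, hP, hcorrect⟩ := exists_rounds_eq_disjCC fun i => padZeros l' '' S i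
  refine ⟨P.comap (padZeros l'), hP.le, fun A hA => ?_⟩
  rw [run_comap, hcorrect (promise_image fun A hA => (hpad A).trans_le (hS A hA)) _
      fun i => Set.mem_image_of_mem _ (hA i),
    intersects_iff_nonempty, intersects_iff_nonempty, intersectingBits_padZeros h,
    Finset.map_nonempty]

end Disjointness

section ZProduct

variable {n l z : ℕ}

open Classical in
/-- The `z`-product of `a`: position `k` codes the tuple
`finFunctionFinEquiv.symm k : Fin z → Fin l`, and only strictly monotone tuples, i.e. `z`-subsets
of positions, can carry a `1`. -/
noncomputable def zProduct (z : ℕ) (a : Fin l → Bool) (k : Fin (l ^ z)) : Bool :=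
  decide (StrictMono (finFunctionFinEquiv.symm k) ∧
    ∀ m, a (finFunctionFinEquiv.symm k m) = true)

variable [NeZero n] {A : Fin n → Fin l → Bool} {k : Fin (l ^ z)}

theorem mem_intersectingBits_zProduct :
    k ∈ intersectingBits (fun i => zProduct z (A i)) ↔
      StrictMono (finFunctionFinEquiv.symm k) ∧
        ∀ m, finFunctionFinEquiv.symm k m ∈ intersectingBits A := by
  simp only [mem_intersectingBits, zProduct, decide_eq_true_eq, forall_and, forall_const]
  rw [forall_comm]

theorem le_card_of_mem_intersectingBits_zProduct
    (hk : k ∈ intersectingBits (fun i => zProduct z (A i))) :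
    z ≤ (intersectingBits A).card := by
  obtain ⟨hmono, hmem⟩ := mem_intersectingBits_zProduct.mp hk
  simpa using Finset.card_le_card_of_injOn (s := Finset.univ) _ (fun m _ => hmem m)
    hmono.injective.injOn

theorem mem_intersectingBits_zProduct_iff_of_card_eq (h : (intersectingBits A).card = z) :
    k ∈ intersectingBits (fun i => zProduct z (A i)) ↔
      finFunctionFinEquiv.symm k = (intersectingBits A).orderEmbOfFin h := by
  rw [mem_intersectingBits_zProduct]
  constructor
  · rintro ⟨hmono, hmem⟩
    exact Finset.orderEmbOfFin_unique h hmem hmono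
  · intro hk
    rw [hk]
    exact ⟨OrderEmbedding.strictMono _, Finset.orderEmbOfFin_mem _ h⟩

theorem card_intersectingBits_zProduct_le_one (h : (intersectingBits A).card ≤ z) :
    (intersectingBits fun i => zProduct z (A i)).card ≤ 1 := by
  refine Finset.card_le_one.mpr fun k hk k' hk' => finFunctionFinEquiv.symm.injective ?_
  have hz := le_antisymm h (le_card_of_mem_intersectingBits_zProduct hk)
  rw [(mem_intersectingBits_zProduct_iff_of_card_eq hz).mp hk,
    (mem_intersectingBits_zProduct_iff_of_card_eq hz).mp hk']

theorem intersects_zProduct_iff (h : (intersectingBits A).card ≤ z) :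
    intersects (fun i => zProduct z (A i)) ↔ (intersectingBits A).card = z := by
  rw [intersects_iff_nonempty]
  constructor
  · rintro ⟨k, hk⟩
    exact le_antisymm h (le_card_of_mem_intersectingBits_zProduct hk)
  · intro hz
    refine ⟨finFunctionFinEquiv ((intersectingBits A).orderEmbOfFin hz), ?_⟩
    rw [mem_intersectingBits_zProduct_iff_of_card_eq hz, Equiv.symm_apply_apply]

end ZProduct

section Reduction

variable {n l z : ℕ} [NeZero n]

theorem disjCC_le_add (hz : 1 ≤ z) :
    disjCC n l z ≤ disjCC n (l ^ z) 1 + disjCC n l (z - 1) := by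
  refine disjCC_le fun S hS => ?_
  obtain ⟨P₀, hP₀, hcorrect₀⟩ :=
    exists_rounds_eq_disjCC (z := 1) fun i => zProduct z '' S i
  set P₁ := P₀.comap (zProduct z)
  have hP₁ : ∀ A : Fin n → Fin l → Bool, (∀ i, A i ∈ S i) →
      (P₁.run A = true ↔ (intersectingBits A).card = z) := fun A hA => by
    have hprom := promise_image fun A hA => card_intersectingBits_zProduct_le_one (hS A hA)
    rw [run_comap, hcorrect₀ hprom _ fun i => Set.mem_image_of_mem _ (hA i),
      intersects_zProduct_iff (hS A hA)]
  set S₂ : List Bool → Fin n → Set (Fin l → Bool) :=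
    fun T i => {a | a ∈ S i ∧ P₁.Consistent i a T}
  have hS₂ : ∀ T, T.length = P₁.rounds → P₁.output T = false →
      Promise n l (z - 1) (S₂ T) := by
    intro T hT hrej A hA
    have hrun := run_eq_output_of_consistent hT fun i => (hA i).2
    have hne := (hP₁ A fun i => (hA i).1).not.mp (by simp [hrun, hrej])
    have hle : (intersectingBits A).card ≤ z := hS A fun i => (hA i).1
    change (intersectingBits A).card ≤ z - 1
    omega
  choose P₂ hP₂ hcorrect₂ using fun T => exists_rounds_eq_disjCC (z := z - 1) (S₂ T)
  refine ⟨P₁.orElse P₂ (disjCC n l (z - 1)), by simp [P₁, comap, hP₀], fun A hA => ?_⟩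
  rw [run_orElse _ _ _ _ hP₂]
  by_cases hacc : P₁.run A = true
  · have hcard := (hP₁ A hA).mp hacc
    simp only [hacc, Bool.true_or, true_iff, intersects_iff_nonempty, ← Finset.card_pos]
    omega
  · have hT := hcorrect₂ _ (hS₂ (P₁.transcript A P₁.rounds) (length_transcript ..)
      (by simpa [run] using hacc)) A
      fun i => ⟨hA i, consistent_transcript _ _ _ _⟩
    simpa [hacc] using hT

end Reduction

theorem disjCC_le_mul {n l z : ℕ} [NeZero n] (hz : 1 ≤ z) :
    disjCC n l z ≤ z * disjCC n (l ^ z) 1 := by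
  induction z, hz using Nat.le_induction with
  | base => simp
  | succ w hw ih =>
    have hpow : l ^ w ≤ l ^ (w + 1) := by
      rcases Nat.eq_zero_or_pos l with rfl | hl
      · simp [zero_pow (by omega : w ≠ 0)]
      · exact Nat.pow_le_pow_right hl (by omega)
    calc disjCC n l (w + 1)
        ≤ disjCC n (l ^ (w + 1)) 1 + disjCC n l w := disjCC_le_add (by omega)
      _ ≤ disjCC n (l ^ (w + 1)) 1 + w * disjCC n (l ^ (w + 1)) 1 := by
        gcongr
        exact ih.trans (Nat.mul_le_mul_left w (disjCC_mono_length hpow))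
      _ = (w + 1) * disjCC n (l ^ (w + 1)) 1 := by ring

/-- `f_z(l) ≤ f_1(l^z) + f_{z-1}(l)`, and consequently `f_z(l) ≤ z · f_1(l^z)`. -/
theorem stmt5 (n l z : ℕ) (hz : 2 ≤ z) :
    disjCC n l z ≤ disjCC n (l ^ z) 1 + disjCC n l (z - 1) ∧
    disjCC n l z ≤ z * disjCC n (l ^ z) 1 := by
  rcases Nat.eq_zero_or_pos n with rfl | hn
  · simp [disjCC_zero_left]
  have : NeZero n := ⟨hn.ne'⟩
  exact ⟨disjCC_le_add (by omega), disjCC_le_mul (by omega)⟩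
end

section
/- Fix a finite set M of m items. Let v : 2^M → ℝ be defined for a fixed nonempty S ⊆ M and constant B > 0 by v({j}) = 3B for j ∈ S, v({j}) = 0 for j ∉ S, extended additively (v(T) = Σ_{j∈T} v({j})). Let ℳ : 2^M → ℝ∪{∞} be a monotone menu with ℳ(∅)=0 whose finite prices are all at most B, and let S* be a profit maximizer of T ↦ v(T) − ℳ(T). Then: (i) if S ⊆ S*, then ℳ(S*) = ℳ(S); (ii) if |S*| < |S|, or |S*| ≥ |S| and S ⊄ S*, then ℳ(S) = ∞. -/
open Finset

/-!
Prices are nonnegative, as `ℳ` is monotone with `ℳ ∅ = 0`. If `ℳ S` is finite, then `S` earns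
at least `3B|S| - B`, whereas a bundle missing an item of `S` earns at most `3B(|S| - 1)`; so
`S ⊆ S*` whenever `ℳ S < ∞`, which gives (ii). If `S ⊆ S*`, the two bundles have the same
value, so maximality of `S*` and monotonicity of `ℳ` force equal prices.
-/

theorem EReal.le_of_coe_sub_le_coe_sub {a : ℝ} {x y : EReal} (h : (a : EReal) - x ≤ a - y) :
    y ≤ x := by
  induction x <;> induction y <;> simp_all [← EReal.coe_sub]
  linarith

theorem EReal.coe_sub_le_self {b : ℝ} {y : EReal} (hy : 0 ≤ y) : (b : EReal) - y ≤ b := by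
  simpa using EReal.sub_le_sub le_rfl hy

theorem price_eq_of_profit_le {α : Type*} {v : α → ℝ} {ℳ : α → EReal} {S Sstar : α}
    (hvS : v S = v Sstar) (hle : ℳ S ≤ ℳ Sstar)
    (hprofit : (v S : EReal) - ℳ S ≤ (v Sstar : EReal) - ℳ Sstar) : ℳ Sstar = ℳ S :=
  le_antisymm (EReal.le_of_coe_sub_le_coe_sub (hvS ▸ hprofit)) hle

theorem subset_of_price_le {M : Type*} [DecidableEq M] {B : ℝ} {S Sstar : Finset M}
    {v : Finset M → ℝ} {ℳ : Finset M → EReal} (hB : 0 < B)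
    (hv : ∀ T : Finset M, v T = ((T ∩ S).card : ℝ) * (3 * B))
    (hnonneg : ∀ T, 0 ≤ ℳ T) (hprofit : (v S : EReal) - ℳ S ≤ (v Sstar : EReal) - ℳ Sstar)
    (hSB : ℳ S ≤ (B : EReal)) : S ⊆ Sstar := by
  by_contra hns
  have hcard : (Sstar ∩ S).card + 1 ≤ S.card :=
    card_lt_card (ssubset_of_subset_of_ne inter_subset_right (by simpa using hns))
  lift ℳ S to ℝ using ⟨ne_top_of_le_ne_top (by simp) hSB,
    ne_bot_of_le_ne_bot (by simp) (hnonneg S)⟩ with q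
  replace hSB : q ≤ B := by exact_mod_cast hSB
  replace hprofit : v S - q ≤ v Sstar := by
    exact_mod_cast hprofit.trans (EReal.coe_sub_le_self (hnonneg Sstar))
  rw [hv, hv, inter_self] at hprofit
  have hcard' : ((Sstar ∩ S).card : ℝ) + 1 ≤ S.card := by exact_mod_cast hcard
  nlinarith

theorem stmt10_general {M : Type*} [DecidableEq M]
    (B : ℝ) (hB : 0 < B)
    (S : Finset M)
    (v : Finset M → ℝ) (hv : ∀ T : Finset M, v T = ((T ∩ S).card : ℝ) * (3 * B))
    (ℳ : Finset M → EReal)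
    (hmono : ∀ T T' : Finset M, T ⊆ T' → ℳ T ≤ ℳ T') (hnorm : ℳ ∅ = 0)
    (hbound : ∀ T, ℳ T ≠ ⊤ → ℳ T ≤ (B : EReal))
    (Sstar : Finset M)
    (hmax : ∀ T : Finset M, (v T : EReal) - ℳ T ≤ (v Sstar : EReal) - ℳ Sstar) :
    (S ⊆ Sstar → ℳ Sstar = ℳ S) ∧
    (Sstar.card < S.card → ℳ S = ⊤) ∧
    (S.card ≤ Sstar.card → ¬ S ⊆ Sstar → ℳ S = ⊤) := by
  have hnonneg (T : Finset M) : 0 ≤ ℳ T := hnorm ▸ hmono ∅ T (empty_subset T)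
  have hsub (hS : ℳ S ≠ ⊤) : S ⊆ Sstar :=
    subset_of_price_le hB hv hnonneg (hmax S) (hbound S hS)
  refine ⟨fun hS => ?_, fun hlt => ?_, fun _ hns => ?_⟩
  · refine price_eq_of_profit_le ?_ (hmono S Sstar hS) (hmax S)
    rw [hv, hv, inter_self, inter_eq_right.mpr hS]
  · by_contra hS
    exact hlt.not_ge (card_le_card (hsub hS))
  · by_contra hS
    exact hns (hsub hS)

/-- Proposition "price-of-bundle": for the additive valuation giving each item of `S`
value `3B` (and `0` to the other items), any profit maximizer `S*` of a monotone
normalized menu with finite prices at most `B` satisfies: (i) if `S ⊆ S*` then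
`ℳ S* = ℳ S`; (ii) if `|S*| < |S|`, or `|S*| ≥ |S|` and `S ⊄ S*`, then `ℳ S = ∞`. -/
theorem stmt10 {M : Type*} [Fintype M] [DecidableEq M]
    (B : ℝ) (hB : 0 < B)
    (S : Finset M) (hSne : S.Nonempty)
    (v : Finset M → ℝ) (hv : ∀ T : Finset M, v T = ((T ∩ S).card : ℝ) * (3 * B))
    (ℳ : Finset M → EReal) (hbot : ∀ T, ℳ T ≠ ⊥)
    (hmono : ∀ T T' : Finset M, T ⊆ T' → ℳ T ≤ ℳ T') (hnorm : ℳ ∅ = 0)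
    (hbound : ∀ T, ℳ T ≠ ⊤ → ℳ T ≤ (B : EReal))
    (Sstar : Finset M)
    (hmax : ∀ T : Finset M, (v T : EReal) - ℳ T ≤ (v Sstar : EReal) - ℳ Sstar) :
    (S ⊆ Sstar → ℳ Sstar = ℳ S) ∧
    (Sstar.card < S.card → ℳ S = ⊤) ∧
    (S.card ≤ Sstar.card → ¬ S ⊆ Sstar → ℳ S = ⊤) :=
  stmt10_general B hB S v hv ℳ hmono hnorm hbound Sstar hmax
end

section
/- Consider the two-player menu optimization problem where Alice holds a menu ℳ from a known finite family U of menus on bundles of a finite set M, Bob holds a monotone valuation v, and a one-way protocol (Alice speaks first, then Bob) must output a bundle maximizing v(S) − ℳ(S). Suppose some protocol uses strictly fewer than log₂|U| bits for Alice's message. Then there exist two distinct menus ℳ, ℳ' ∈ U on which Alice sends the same message, and there exists a single-minded monotone valuation v (taking value (ℳ(S₀)+ℳ'(S₀))/2 on supersets of some bundle S₀ where the menus differ, 0 elsewhere) such that the protocol's output is incorrect on at least one of the two menus: every profit maximizer under ℳ contains S₀ iff every profit maximizer under ℳ' does not. -/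
/-!
Alice's message cannot separate all menus, so two distinct menus `ℳ`, `ℳ'` share a message, and
they differ on some bundle `S₀`, say `ℳ' S₀ < ℳ S₀`. For the single-minded valuation with value
`x` strictly between the two prices, buying `S₀` (or any superset) is a loss under `ℳ` and a
strict gain under `ℳ'`, so a profit maximizer contains `S₀` under `ℳ'` and does not under `ℳ`.
Bob sees the same message in both cases, hence one and the same output, which cannot be optimal
for both menus.
-/

open Finset

section

variable {M : Type*}

lemma apply_nonneg_of_monotone {ℳ : Finset M → ℝ} (hℳ : Monotone ℳ) (hℳ0 : ℳ ∅ = 0)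
    (T : Finset M) : 0 ≤ ℳ T :=
  hℳ0 ▸ hℳ (empty_subset T)

variable [DecidableEq M]

def singleMinded (S₀ : Finset M) (x : ℝ) (T : Finset M) : ℝ :=
  if S₀ ⊆ T then x else 0

def IsProfitMax (v ℳ : Finset M → ℝ) (T : Finset M) : Prop :=
  ∀ R, v R - ℳ R ≤ v T - ℳ T

lemma singleMinded_nonneg {S₀ : Finset M} {x : ℝ} (hx : 0 ≤ x) (T : Finset M) :
    0 ≤ singleMinded S₀ x T := by
  unfold singleMinded
  split_ifs <;> simp [hx]

lemma singleMinded_monotone {S₀ : Finset M} {x : ℝ} (hx : 0 ≤ x) :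
    Monotone (singleMinded S₀ x) := by
  intro A B hAB
  by_cases hA : S₀ ⊆ A
  · simp [singleMinded, hA, hA.trans hAB]
  · simpa [singleMinded, hA] using singleMinded_nonneg hx B

/-- The empty bundle is strictly more profitable than any bundle containing `S₀`. -/
lemma not_subset_of_isProfitMax {ℳ : Finset M → ℝ} (hℳ : Monotone ℳ) (hℳ0 : ℳ ∅ = 0)
    {S₀ : Finset M} {x : ℝ} (hx : 0 ≤ x) (hlt : x < ℳ S₀) {T : Finset M}
    (hT : IsProfitMax (singleMinded S₀ x) ℳ T) : ¬ S₀ ⊆ T := by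
  intro hsub
  have hempty := hT ∅
  have hv : singleMinded S₀ x T = x := if_pos hsub
  have : 0 ≤ singleMinded S₀ x ∅ := singleMinded_nonneg hx ∅
  have : ℳ S₀ ≤ ℳ T := hℳ hsub
  linarith

/-- `S₀` itself is strictly more profitable than any bundle not containing it. -/
lemma subset_of_isProfitMax {ℳ : Finset M → ℝ} (hℳ : Monotone ℳ) (hℳ0 : ℳ ∅ = 0)
    {S₀ : Finset M} {x : ℝ} (hlt : ℳ S₀ < x) {T : Finset M}
    (hT : IsProfitMax (singleMinded S₀ x) ℳ T) : S₀ ⊆ T := by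
  by_contra hsub
  have hS₀ := hT S₀
  have hv₀ : singleMinded S₀ x S₀ = x := if_pos subset_rfl
  have hv : singleMinded S₀ x T = 0 := if_neg hsub
  have := apply_nonneg_of_monotone hℳ hℳ0 T
  linarith

end

lemma exists_ne_map_eq_and_apply_lt {ι β γ : Type*} [Fintype β] [LinearOrder γ]
    (U : Finset (ι → γ)) (hU : Fintype.card β < U.card) (a : (ι → γ) → β) :
    ∃ f ∈ U, ∃ g ∈ U, f ≠ g ∧ a f = a g ∧ ∃ i, g i < f i := by
  obtain ⟨f, hf, g, hg, hne, ha⟩ :=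
    exists_ne_map_eq_of_card_lt_of_maps_to (t := univ) (by simpa using hU)
      (fun f _ => mem_univ (a f))
  obtain ⟨i, hi⟩ := Function.ne_iff.mp hne
  rcases hi.lt_or_gt with h | h
  · exact ⟨g, hg, f, hf, hne.symm, ha.symm, i, h⟩
  · exact ⟨f, hf, g, hg, hne, ha, i, h⟩

theorem stmt11_general {M : Type*} [DecidableEq M]
    {Msg : Type*} [Fintype Msg]
    (U : Finset (Finset M → ℝ))
    (hU : ∀ ℳ ∈ U, (∀ A B : Finset M, A ⊆ B → ℳ A ≤ ℳ B) ∧ ℳ ∅ = 0)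
    (hsmall : Fintype.card Msg < U.card)
    (a : (Finset M → ℝ) → Msg)
    (out : Msg → (Finset M → ℝ) → Finset M) :
    ∃ ℳ ∈ U, ∃ ℳ' ∈ U, ℳ ≠ ℳ' ∧ a ℳ = a ℳ' ∧
      ∃ (S₀ : Finset M) (v : Finset M → ℝ),
        ℳ' S₀ < ℳ S₀ ∧
        (∀ T : Finset M, v T = if S₀ ⊆ T then (ℳ S₀ + ℳ' S₀) / 2 else 0) ∧
        (∀ A B : Finset M, A ⊆ B → v A ≤ v B) ∧
        (∀ T : Finset M, (∀ R, v R - ℳ R ≤ v T - ℳ T) → ¬ S₀ ⊆ T) ∧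
        (∀ T : Finset M, (∀ R, v R - ℳ' R ≤ v T - ℳ' T) → S₀ ⊆ T) ∧
        (¬ (∀ R, v R - ℳ R ≤ v (out (a ℳ) v) - ℳ (out (a ℳ) v)) ∨
          ¬ (∀ R, v R - ℳ' R ≤ v (out (a ℳ') v) - ℳ' (out (a ℳ') v))) := by
  obtain ⟨ℳ, hℳU, ℳ', hℳ'U, hne, ha, S₀, hlt⟩ := exists_ne_map_eq_and_apply_lt U hsmall a
  obtain ⟨hℳ, hℳ0⟩ := hU ℳ hℳU
  obtain ⟨hℳ', hℳ'0⟩ := hU ℳ' hℳ'U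
  set x := (ℳ S₀ + ℳ' S₀) / 2 with hx
  have hx₀ : 0 ≤ x := by
    have := apply_nonneg_of_monotone hℳ' hℳ'0 S₀
    linarith
  have hnot : ∀ T, IsProfitMax (singleMinded S₀ x) ℳ T → ¬ S₀ ⊆ T :=
    fun T => not_subset_of_isProfitMax hℳ hℳ0 hx₀ (by linarith)
  have hsub : ∀ T, IsProfitMax (singleMinded S₀ x) ℳ' T → S₀ ⊆ T :=
    fun T => subset_of_isProfitMax hℳ' hℳ'0 (by linarith)
  refine ⟨ℳ, hℳU, ℳ', hℳ'U, hne, ha, S₀, singleMinded S₀ x, hlt, fun _ => rfl,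
    fun _ _ => (singleMinded_monotone hx₀ ·), hnot, hsub, ?_⟩
  rw [← not_and_or]
  rintro ⟨hopt, hopt'⟩
  exact hnot _ hopt (ha ▸ hsub _ hopt')

/-- One-way menu optimization needs `log₂|U|` bits: if Alice's message space is smaller
than the family `U` of (monotone, normalized) menus, then two distinct menus get the
same message, and a single-minded valuation witnesses incorrectness of the protocol on
at least one of them, because every profit maximizer under one menu must contain the
differing bundle `S₀` while every profit maximizer under the other must not. -/
theorem stmt11 {M : Type*} [Fintype M] [DecidableEq M]
    {Msg : Type*} [Fintype Msg]
    (U : Finset (Finset M → ℝ))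
    (hU : ∀ ℳ ∈ U, (∀ A B : Finset M, A ⊆ B → ℳ A ≤ ℳ B) ∧ ℳ ∅ = 0)
    (hsmall : Fintype.card Msg < U.card)
    (a : (Finset M → ℝ) → Msg)
    (out : Msg → (Finset M → ℝ) → Finset M) :
    ∃ ℳ ∈ U, ∃ ℳ' ∈ U, ℳ ≠ ℳ' ∧ a ℳ = a ℳ' ∧
      ∃ (S₀ : Finset M) (v : Finset M → ℝ),
        ℳ' S₀ < ℳ S₀ ∧
        (∀ T : Finset M, v T = if S₀ ⊆ T then (ℳ S₀ + ℳ' S₀) / 2 else 0) ∧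
        (∀ A B : Finset M, A ⊆ B → v A ≤ v B) ∧
        (∀ T : Finset M, (∀ R, v R - ℳ R ≤ v T - ℳ T) → ¬ S₀ ⊆ T) ∧
        (∀ T : Finset M, (∀ R, v R - ℳ' R ≤ v T - ℳ' T) → S₀ ⊆ T) ∧
        (¬ (∀ R, v R - ℳ R ≤ v (out (a ℳ) v) - ℳ (out (a ℳ) v)) ∨
          ¬ (∀ R, v R - ℳ' R ≤ v (out (a ℳ') v) - ℳ' (out (a ℳ') v))) :=
  stmt11_general U hU hsmall a out
end
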